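/- arXiv:2010.01818 — 5 statements merged into one kernel-verified Lean document; each statement's English description precedes it below -/
import Mathlib

section
/- Let S be a nonempty finite set, let r_w ∈ (0, 1] for each w ∈ S, and set b := 1 − ∏_{w ∈ S}(1 − r_w). Let {G_w}_{w ∈ S} be independent geometric random variables on {1, 2, ...}, G_w with parameter r_w, and let B be a Bernoulli random variable with parameter b, independent of the family {G_w}. Then for every natural number β and every real number ℓ, E[ ℓ · B · min{ min_{w ∈ S} G_w, β } ] = ℓ · (1 − (∏_{w ∈ S}(1 − r_w))^β). In particular, for ℓ ∈ [0,1] this quantity is at most ℓ. -/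
open MeasureTheory ProbabilityTheory

/-- `Y` has a geometric distribution on `{1, 2, ...}` with parameter `p`:
`P(Y = n) = p * (1 - p)^(n - 1)` for every integer `n ≥ 1`. -/
def IsGeometric {Ω : Type*} [MeasurableSpace Ω] (μ : Measure Ω) (Y : Ω → ℕ) (p : ℝ) : Prop :=
  ∀ n : ℕ, 1 ≤ n → (μ {ω | Y ω = n}).toReal = p * (1 - p) ^ (n - 1)

/-- `X` is a Bernoulli random variable with parameter `p`: it takes values in `{0, 1}`,
with `P(X = 1) = p` and `P(X = 0) = 1 - p`. -/
def IsBernoulli {Ω : Type*} [MeasurableSpace Ω] (μ : Measure Ω) (X : Ω → ℕ) (p : ℝ) : Prop :=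
  (∀ ω, X ω = 0 ∨ X ω = 1) ∧
    (μ {ω | X ω = 1}).toReal = p ∧ (μ {ω | X ω = 0}).toReal = 1 - p

/-! Write `M = min_w G_w` and `q = ∏_w (1 - r_w)`. Since `B ∈ {0, 1}`,
`B · min(M, β) = ∑_{n < β} 1[B = 1 ∧ n < M]`, and by independence the event `{B = 1 ∧ n < M}`
has probability `b · ∏_w (1 - r_w)^n = (1 - q) q^n`. The sum telescopes to `1 - q^β`. -/

open Finset

lemma IsGeometric.measureReal_lt {Ω : Type*} [MeasurableSpace Ω] {μ : Measure Ω}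
    [IsFiniteMeasure μ] {Y : Ω → ℕ} {p : ℝ} (h : IsGeometric μ Y p) (hY : Measurable Y)
    (hp : p ∈ Set.Ioc 0 1) (n : ℕ) :
    μ.real {ω | n < Y ω} = (1 - p) ^ n := by
  have hunion : {ω | n < Y ω} = ⋃ k : ℕ, {ω | Y ω = n + 1 + k} := by
    ext ω
    simp only [Set.mem_ofPred_eq, Set.mem_iUnion]
    exact ⟨fun hω => ⟨Y ω - (n + 1), by omega⟩, fun ⟨k, hk⟩ => by omega⟩
  have hdisj : Pairwise fun j k : ℕ => Disjoint {ω | Y ω = n + 1 + j} {ω | Y ω = n + 1 + k} := by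
    intro j k hjk
    refine Set.disjoint_left.2 fun ω hj hk => hjk ?_
    simp only [Set.mem_ofPred_eq] at hj hk
    omega
  calc μ.real {ω | n < Y ω} = ∑' k : ℕ, μ.real {ω | Y ω = n + 1 + k} := by
        rw [hunion, measureReal_def, measure_iUnion hdisj fun k => hY (measurableSet_singleton _),
          ENNReal.tsum_toReal_eq fun _ => measure_ne_top _ _]
        rfl
    _ = ∑' k : ℕ, p * (1 - p) ^ n * (1 - p) ^ k := by
        congr 1
        funext k
        rw [measureReal_def, h _ (by omega), Nat.add_right_comm, Nat.add_sub_cancel, pow_add]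
        ring
    _ = (1 - p) ^ n := by
        rw [tsum_mul_left, tsum_geometric_of_lt_one (by linarith [hp.2]) (by linarith [hp.1])]
        field_simp [hp.1.ne']
        ring

lemma ProbabilityTheory.iIndepFun.measureReal_inter_iInter_preimage_option {Ω S β : Type*}
    [MeasurableSpace Ω] {μ : Measure Ω} [Fintype S] [MeasurableSpace β] {X : Ω → β} {Y : S → Ω → β}
    (h : iIndepFun (fun o : Option S => Option.elim o X Y) μ) {s : Set β} {t : S → Set β}
    (hs : MeasurableSet s) (ht : ∀ w, MeasurableSet (t w)) :
    μ.real (X ⁻¹' s ∩ ⋂ w, Y w ⁻¹' t w) = μ.real (X ⁻¹' s) * ∏ w, μ.real (Y w ⁻¹' t w) := by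
  have := h.measure_inter_preimage_eq_mul univ (sets := fun o => Option.elim o s t)
    (by rintro (_ | w) _ <;> simp [hs, ht])
  simp only [mem_univ, Set.iInter_true, Set.iInter_option, Fintype.prod_option, Option.elim] at this
  simp only [measureReal_def, this, ENNReal.toReal_mul, ENNReal.toReal_prod]

lemma Nat.cast_min_eq_sum_range {R : Type*} [AddCommMonoidWithOne R] (m β : ℕ) :
    ((min m β : ℕ) : R) = ∑ n ∈ range β, if n < m then 1 else 0 := by
  rw [sum_boole, ← card_range (min m β)]
  congr 2
  ext n
  simp only [mem_range, mem_filter, lt_min_iff, and_comm]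

lemma mul_min_inf'_eq_sum_indicator {Ω S : Type*} [Fintype S] [Nonempty S] {B : Ω → ℕ}
    (hB : ∀ ω, B ω = 0 ∨ B ω = 1) (G : S → Ω → ℕ) (β : ℕ) (ω : Ω) :
    (B ω : ℝ) * min (univ.inf' univ_nonempty fun w => (G w ω : ℝ)) β
      = ∑ n ∈ range β, (B ⁻¹' {1} ∩ ⋂ w, G w ⁻¹' Set.Ioi n).indicator 1 ω := by
  rw [← Nat.cast_finsetInf', ← Nat.cast_min, Nat.cast_min_eq_sum_range, mul_sum]
  refine sum_congr rfl fun n _ => ?_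
  rcases hB ω with hω | hω <;>
    simp [Set.indicator, hω, lt_inf'_iff]

theorem stmt4 {Ω : Type*} [MeasurableSpace Ω] (μ : Measure Ω) [IsProbabilityMeasure μ]
    {S : Type*} [Fintype S] [Nonempty S]
    (r : S → ℝ) (hr : ∀ w, r w ∈ Set.Ioc (0 : ℝ) 1)
    (b : ℝ) (hb : b = 1 - ∏ w, (1 - r w))
    (G : S → Ω → ℕ) (hGmeas : ∀ w, Measurable (G w))
    (hgeom : ∀ w, IsGeometric μ (G w) (r w))
    (B : Ω → ℕ) (hBmeas : Measurable B) (hber : IsBernoulli μ B b)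
    (hind : iIndepFun
      (fun o : Option S => Option.elim o B G) μ)
    (β : ℕ) (ℓ : ℝ) :
    (∫ ω, ℓ * (B ω : ℝ) *
        (min (Finset.univ.inf' Finset.univ_nonempty (fun w => G w ω)) β : ℝ) ∂μ
      = ℓ * (1 - (∏ w, (1 - r w)) ^ β)) ∧
    (ℓ ∈ Set.Icc (0 : ℝ) 1 →
      ∫ ω, ℓ * (B ω : ℝ) *
          (min (Finset.univ.inf' Finset.univ_nonempty (fun w => G w ω)) β : ℝ) ∂μ ≤ ℓ) := by
  set q := ∏ w, (1 - r w)
  set A : ℕ → Set Ω := fun n => B ⁻¹' {1} ∩ ⋂ w, G w ⁻¹' Set.Ioi n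
  have hA_meas n : MeasurableSet (A n) :=
    (hBmeas (measurableSet_singleton 1)).inter (.iInter fun w => hGmeas w measurableSet_Ioi)
  have hA n : μ.real (A n) = (1 - q) * q ^ n := by
    rw [hind.measureReal_inter_iInter_preimage_option (measurableSet_singleton 1)
      fun _ => measurableSet_Ioi, ← prod_pow]
    congr 1
    · exact hber.2.1.trans hb
    · exact prod_congr rfl fun w _ => (hgeom w).measureReal_lt (hGmeas w) (hr w) n
  have hmain : ∫ ω, ℓ * (B ω : ℝ) *
      (min (Finset.univ.inf' Finset.univ_nonempty (fun w => G w ω)) β : ℝ) ∂μ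
      = ℓ * (1 - q ^ β) := calc
    _ = ∫ ω, ℓ * ∑ n ∈ range β, (A n).indicator 1 ω ∂μ := by
      simp_rw [mul_assoc, mul_min_inf'_eq_sum_indicator hber.1]
      rfl
    _ = ℓ * ∑ n ∈ range β, μ.real (A n) := by
      rw [integral_const_mul, integral_finsetSum _ fun n _ =>
        (integrable_const 1).indicator (hA_meas n)]
      simp_rw [integral_indicator_one (hA_meas _)]
    _ = ℓ * (1 - q ^ β) := by simp_rw [hA, ← mul_sum, mul_neg_geom_sum]
  have hq : 0 ≤ q := prod_nonneg fun w _ => sub_nonneg.2 (hr w).2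
  exact ⟨hmain, fun hℓ => hmain ▸ mul_le_of_le_one_right hℓ.1 (by linarith [pow_nonneg hq β])⟩
end

section
/- Let G = (V, E) be a finite simple undirected graph with independence number α₁. Let q : V → ℝ satisfy q(v) ≥ 0 for all v ∈ V, and define Q(v) := ∑_{w ∈ N(v)} q(w), where N(v) denotes the closed neighborhood of v. Assume Q(v) > 0 for all v ∈ V. Then ∑_{v ∈ V} q(v)/Q(v) ≤ α₁. -/
/-!
Greedy argument: restrict the weights to a vertex set `s` and pick `u ∈ s` whose closed
neighbourhood in `s` has the least weight `W`. Every vertex `v` of that neighbourhood has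
weight at least `W`, so the neighbourhood contributes at most `∑ q v / W ≤ 1`. Deleting the
neighbourhood can only decrease the weights of the remaining vertices, so by induction their
contribution is at most the size of an independent set avoiding the neighbourhood, and adding
`u` to it gives an independent set of `s`.
-/

open Finset

lemma div_le_div_of_le_of_le_left {𝕜 : Type*} [Field 𝕜] [LinearOrder 𝕜] [IsStrictOrderedRing 𝕜]
    {a b c : 𝕜} (ha : 0 ≤ a) (hac : a ≤ c) (hcb : c ≤ b) : a / b ≤ a / c := by
  rcases ha.eq_or_lt with rfl | ha
  · simp
  · exact div_le_div_of_nonneg_left ha.le (ha.trans_le hac) hcb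

namespace SimpleGraph

variable {V 𝕜 : Type*} [DecidableEq V] (G : SimpleGraph V) [LocallyFinite G]
  [Field 𝕜] [LinearOrder 𝕜] [IsStrictOrderedRing 𝕜] {q : V → 𝕜}

def closedNbhdWeight (q : V → 𝕜) (s : Finset V) (v : V) : 𝕜 :=
  ∑ w ∈ insert v (G.neighborFinset v) ∩ s, q w

variable {G}

lemma le_closedNbhdWeight (hq : ∀ v, 0 ≤ q v) {s : Finset V} {v w : V}
    (hw : w ∈ insert v (G.neighborFinset v) ∩ s) : q w ≤ G.closedNbhdWeight q s v :=
  single_le_sum (fun x _ => hq x) hw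

lemma closedNbhdWeight_mono (hq : ∀ v, 0 ≤ q v) {s t : Finset V} (hst : s ⊆ t) (v : V) :
    G.closedNbhdWeight q s v ≤ G.closedNbhdWeight q t v :=
  sum_le_sum_of_subset_of_nonneg (inter_subset_inter_left hst) fun x _ _ => hq x

lemma sum_div_closedNbhdWeight_le_one (hq : ∀ v, 0 ≤ q v) {s : Finset V} {u : V}
    (hmin : ∀ v ∈ s, G.closedNbhdWeight q s u ≤ G.closedNbhdWeight q s v) :
    ∑ v ∈ insert u (G.neighborFinset u) ∩ s, q v / G.closedNbhdWeight q s v ≤ 1 :=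
  calc ∑ v ∈ insert u (G.neighborFinset u) ∩ s, q v / G.closedNbhdWeight q s v
      ≤ ∑ v ∈ insert u (G.neighborFinset u) ∩ s, q v / G.closedNbhdWeight q s u :=
        sum_le_sum fun v hv => div_le_div_of_le_of_le_left (hq v) (le_closedNbhdWeight hq hv)
          (hmin v (mem_inter.1 hv).2)
    _ = G.closedNbhdWeight q s u / G.closedNbhdWeight q s u := (sum_div ..).symm
    _ ≤ 1 := div_self_le_one _

lemma sum_div_closedNbhdWeight_le_of_subset (hq : ∀ v, 0 ≤ q v) {s t : Finset V} (hst : s ⊆ t) :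
    ∑ v ∈ s, q v / G.closedNbhdWeight q t v ≤ ∑ v ∈ s, q v / G.closedNbhdWeight q s v :=
  sum_le_sum fun v hv => div_le_div_of_le_of_le_left (hq v)
    (le_closedNbhdWeight hq (mem_inter.2 ⟨mem_insert_self v _, hv⟩)) (closedNbhdWeight_mono hq hst v)

lemma isIndepSet_insert_of_disjoint {t : Finset V} {u : V} (ht : G.IsIndepSet (t : Set V))
    (htu : Disjoint t (insert u (G.neighborFinset u))) : G.IsIndepSet (insert u (t : Set V)) := by
  have hnadj : ∀ v ∈ t, ¬ G.Adj u v := fun v hv huv =>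
    Finset.disjoint_left.1 htu hv (mem_insert_of_mem ((G.mem_neighborFinset u v).2 huv))
  exact Set.pairwise_insert.2 ⟨ht, fun v hv _ => ⟨hnadj v hv, fun hvu => hnadj v hv hvu.symm⟩⟩

theorem exists_isIndepSet_sum_div_closedNbhdWeight_le (hq : ∀ v, 0 ≤ q v) (s : Finset V) :
    ∃ t ⊆ s, G.IsIndepSet (t : Set V) ∧
      ∑ v ∈ s, q v / G.closedNbhdWeight q s v ≤ t.card := by
  induction s using strongInduction with
  | H s ih =>
  rcases s.eq_empty_or_nonempty with rfl | hs
  · exact ⟨∅, Subset.rfl, by simp, by simp⟩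
  obtain ⟨u, hu, hmin⟩ := exists_min_image s (G.closedNbhdWeight q s) hs
  set N := insert u (G.neighborFinset u)
  have hlt : s \ N ⊂ s :=
    (ssubset_iff_of_subset sdiff_subset).2 ⟨u, hu, fun h => (mem_sdiff.1 h).2 (mem_insert_self u _)⟩
  obtain ⟨t, hts, ht, hsum⟩ := ih _ hlt
  have htN : Disjoint t N := sdiff_disjoint.mono_left hts
  have hut : u ∉ t := fun h => Finset.disjoint_left.1 htN h (mem_insert_self u _)
  refine ⟨insert u t, insert_subset hu (hts.trans sdiff_subset), ?_, ?_⟩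
  · rw [coe_insert]
    exact isIndepSet_insert_of_disjoint ht htN
  · calc ∑ v ∈ s, q v / G.closedNbhdWeight q s v
        = ∑ v ∈ N ∩ s, q v / G.closedNbhdWeight q s v
          + ∑ v ∈ s \ N, q v / G.closedNbhdWeight q s v := by
          rw [inter_comm, sum_inter_add_sum_sdiff]
      _ ≤ 1 + t.card := add_le_add (sum_div_closedNbhdWeight_le_one hq hmin)
          ((sum_div_closedNbhdWeight_le_of_subset hq sdiff_subset).trans hsum)
      _ = (insert u t).card := by rw [card_insert_of_notMem hut, Nat.cast_succ, add_comm]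

end SimpleGraph

theorem stmt5_general {V : Type*} [Fintype V] [DecidableEq V] (G : SimpleGraph V) [DecidableRel G.Adj]
    (α₁ : ℕ)
    (hα : IsGreatest
      {n : ℕ | ∃ s : Finset V, s.card = n ∧ ∀ v ∈ s, ∀ w ∈ s, ¬ G.Adj v w} α₁)
    (q : V → ℝ) (hq : ∀ v, 0 ≤ q v)
    (Q : V → ℝ) (hQdef : ∀ v, Q v = ∑ w ∈ insert v (G.neighborFinset v), q w) :
    ∑ v, q v / Q v ≤ (α₁ : ℝ) := by
  obtain ⟨t, -, ht, hsum⟩ := G.exists_isIndepSet_sum_div_closedNbhdWeight_le hq univ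
  have hQ : ∀ v, Q v = G.closedNbhdWeight q univ v := fun v => by
    rw [hQdef, SimpleGraph.closedNbhdWeight, inter_univ]
  have hcard : t.card ≤ α₁ :=
    hα.2 ⟨t, rfl, fun v hv w hw hvw => ht hv hw (G.ne_of_adj hvw) hvw⟩
  calc ∑ v, q v / Q v = ∑ v, q v / G.closedNbhdWeight q univ v := by simp only [hQ]
    _ ≤ t.card := hsum
    _ ≤ α₁ := Nat.cast_le.2 hcard

theorem stmt5 {V : Type*} [Fintype V] [DecidableEq V] (G : SimpleGraph V) [DecidableRel G.Adj]
    (α₁ : ℕ)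
    (hα : IsGreatest
      {n : ℕ | ∃ s : Finset V, s.card = n ∧ ∀ v ∈ s, ∀ w ∈ s, ¬ G.Adj v w} α₁)
    (q : V → ℝ) (hq : ∀ v, 0 ≤ q v)
    (Q : V → ℝ) (hQdef : ∀ v, Q v = ∑ w ∈ insert v (G.neighborFinset v), q w)
    (hQpos : ∀ v, 0 < Q v) :
    ∑ v, q v / Q v ≤ (α₁ : ℝ) :=
  stmt5_general G α₁ hα q hq Q hQdef
end

section
/- Let G = (V, E) be a finite simple undirected graph with independence number α₁, and let p : V → [0, 1]. For each v ∈ V define q(v) := 1 − ∏_{w ∈ N(v)} (1 − p(w)), where N(v) is the closed neighborhood of v (with the convention that a summand p(v)/q(v) is 0 when p(v) = 0). Then ∑_{v ∈ V} p(v)/q(v) ≤ (1/(1 − e^{−1})) · ( α₁ + ∑_{v ∈ V} p(v) ). -/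
/-!
Write `P(v) = ∑_{w ∈ N(v)} p(w)`. Since `∏ (1 - p w) ≤ exp (-P(v))` and `1 - exp (-x)` is concave,
`q(v) ≥ (1 - e⁻¹) · min 1 (P(v))`, hence `p(v)/q(v) ≤ (p(v) + p(v)/P(v)) / (1 - e⁻¹)`.
It remains to bound `∑_v p(v)/P(v)` by `α₁`, a weighted Caro–Wei inequality proved greedily:
a vertex `v` of minimal closed-neighborhood weight contributes at most `1` in total over `N(v)`,
so it can be put into the independent set and `N(v)` deleted.
-/

open Finset Real

lemma div_le_div_of_le_of_nonneg_left {a b c : ℝ} (ha : 0 ≤ a) (hac : a ≤ c) (hcb : c ≤ b) :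
    a / b ≤ a / c := by
  rcases ha.eq_or_lt with rfl | ha
  · simp
  · exact div_le_div_of_nonneg_left ha.le (ha.trans_le hac) hcb

lemma div_min_one_le {a x : ℝ} (ha : 0 ≤ a) (hx : 0 < x) : a / min 1 x ≤ a + a / x := by
  rcases le_total 1 x with h | h
  · rw [min_eq_left h, div_one]
    linarith [div_nonneg ha hx.le]
  · rw [min_eq_right h]
    linarith

lemma prod_one_sub_le_exp_neg_sum {ι : Type*} (s : Finset ι) {p : ι → ℝ}
    (hp : ∀ i ∈ s, p i ≤ 1) : ∏ i ∈ s, (1 - p i) ≤ exp (-∑ i ∈ s, p i) := by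
  rw [← sum_neg_distrib, exp_sum]
  exact prod_le_prod (fun i hi => sub_nonneg.2 (hp i hi)) fun i _ => one_sub_le_exp_neg (p i)

lemma one_sub_exp_neg_one_mul_min_le {x : ℝ} (hx : 0 ≤ x) :
    (1 - exp (-1)) * min 1 x ≤ 1 - exp (-x) := by
  rcases le_total 1 x with h | h
  · rw [min_eq_left h, mul_one]
    gcongr
  · rw [min_eq_right h]
    -- convexity of `exp` on `[-1, 0]`, at the point `-x = (1 - x) • 0 + x • (-1)`
    have hconv := convexOn_exp.2 (Set.mem_univ 0) (Set.mem_univ (-1)) (sub_nonneg.2 h) hx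
      (by ring)
    simp only [smul_eq_mul, mul_zero, zero_add, mul_neg, mul_one, exp_zero] at hconv
    linarith

lemma one_sub_exp_neg_one_pos : 0 < 1 - exp (-1) :=
  sub_pos.2 (exp_lt_one_iff.2 (by norm_num))

lemma div_one_sub_prod_one_sub_le {ι : Type*} {s : Finset ι} {p : ι → ℝ} {i : ι} (hi : i ∈ s)
    (hp : ∀ j ∈ s, p j ∈ Set.Icc (0 : ℝ) 1) :
    p i / (1 - ∏ j ∈ s, (1 - p j)) ≤ (p i + p i / ∑ j ∈ s, p j) / (1 - exp (-1)) := by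
  rcases (hp i hi).1.eq_or_lt with hpi | hpi
  · simp [← hpi]
  set P := ∑ j ∈ s, p j
  have hP : 0 < P := hpi.trans_le (single_le_sum (fun j hj => (hp j hj).1) hi)
  have hc := one_sub_exp_neg_one_pos
  have hq : (1 - exp (-1)) * min 1 P ≤ 1 - ∏ j ∈ s, (1 - p j) :=
    (one_sub_exp_neg_one_mul_min_le hP.le).trans
      (by linarith [prod_one_sub_le_exp_neg_sum s fun j hj => (hp j hj).2])
  calc p i / (1 - ∏ j ∈ s, (1 - p j))
      ≤ p i / ((1 - exp (-1)) * min 1 P) :=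
        div_le_div_of_nonneg_left hpi.le (by positivity) hq
    _ = p i / min 1 P / (1 - exp (-1)) := by rw [div_mul_eq_div_div_swap]
    _ ≤ (p i + p i / P) / (1 - exp (-1)) := by gcongr; exact div_min_one_le hpi.le hP

namespace SimpleGraph

lemma isIndepSet_insert_of_forall_not_adj {V : Type*} {G : SimpleGraph V} {t : Set V} {v : V}
    (ht : G.IsIndepSet t) (hv : ∀ w ∈ t, ¬G.Adj v w) : G.IsIndepSet (insert v t) :=
  Set.pairwise_insert.2 ⟨ht, fun w hw _ => ⟨hv w hw, fun h => hv w hw h.symm⟩⟩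

variable {V : Type*} [DecidableEq V] (G : SimpleGraph V) [G.LocallyFinite]

def closedNeighborWeight (p : V → ℝ) (s : Finset V) (v : V) : ℝ :=
  ∑ w ∈ insert v (G.neighborFinset v) ∩ s, p w

variable {G} {p : V → ℝ}

lemma le_closedNeighborWeight (hp : ∀ v, 0 ≤ p v) {s : Finset V} {u v : V}
    (hu : u ∈ insert v (G.neighborFinset v) ∩ s) : p u ≤ G.closedNeighborWeight p s v :=
  single_le_sum (fun w _ => hp w) hu

lemma closedNeighborWeight_mono (hp : ∀ v, 0 ≤ p v) {s t : Finset V} (hst : s ⊆ t) (v : V) :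
    G.closedNeighborWeight p s v ≤ G.closedNeighborWeight p t v :=
  sum_le_sum_of_subset_of_nonneg (inter_subset_inter_left hst) fun w _ _ => hp w

lemma sum_div_closedNeighborWeight_le_one (hp : ∀ v, 0 ≤ p v) {s : Finset V} {v : V}
    (hmin : ∀ u ∈ s, G.closedNeighborWeight p s v ≤ G.closedNeighborWeight p s u) :
    ∑ u ∈ s ∩ insert v (G.neighborFinset v), p u / G.closedNeighborWeight p s u ≤ 1 :=
  calc ∑ u ∈ s ∩ insert v (G.neighborFinset v), p u / G.closedNeighborWeight p s u
      ≤ ∑ u ∈ s ∩ insert v (G.neighborFinset v), p u / G.closedNeighborWeight p s v :=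
        sum_le_sum fun u hu => div_le_div_of_le_of_nonneg_left (hp u)
          (le_closedNeighborWeight hp (by rwa [inter_comm])) (hmin u (mem_of_mem_inter_left hu))
    _ = G.closedNeighborWeight p s v / G.closedNeighborWeight p s v := by
        rw [← sum_div, inter_comm, closedNeighborWeight]
    _ ≤ 1 := div_self_le_one _

theorem exists_isIndepSet_sum_div_closedNeighborWeight_le (hp : ∀ v, 0 ≤ p v) (s : Finset V) :
    ∃ t ⊆ s, G.IsIndepSet t ∧ ∑ v ∈ s, p v / G.closedNeighborWeight p s v ≤ #t := by
  induction s using strongInduction with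
  | _ s ih =>
  rcases s.eq_empty_or_nonempty with rfl | hne
  · exact ⟨∅, empty_subset _, by simp, by simp⟩
  obtain ⟨v, hvs, hmin⟩ := s.exists_min_image (G.closedNeighborWeight p s) hne
  set N := insert v (G.neighborFinset v)
  have hvN : v ∈ N := mem_insert_self _ _
  have hsub : s \ N ⊂ s :=
    (ssubset_iff_of_subset sdiff_subset).2 ⟨v, hvs, fun h => (mem_sdiff.1 h).2 hvN⟩
  obtain ⟨t, hts, ht, hsum⟩ := ih (s \ N) hsub
  have hvt : v ∉ t := fun h => (mem_sdiff.1 (hts h)).2 hvN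
  refine ⟨insert v t, insert_subset hvs (hts.trans sdiff_subset), ?_, ?_⟩
  · rw [coe_insert]
    exact isIndepSet_insert_of_forall_not_adj ht fun w hw hvw =>
      (mem_sdiff.1 (hts hw)).2 (mem_insert_of_mem ((G.mem_neighborFinset v w).2 hvw))
  · have hrest : ∑ u ∈ s \ N, p u / G.closedNeighborWeight p s u
        ≤ ∑ u ∈ s \ N, p u / G.closedNeighborWeight p (s \ N) u :=
      sum_le_sum fun u hu => div_le_div_of_le_of_nonneg_left (hp u)
        (le_closedNeighborWeight hp (mem_inter.2 ⟨mem_insert_self _ _, hu⟩))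
        (closedNeighborWeight_mono hp sdiff_subset u)
    have hN := sum_div_closedNeighborWeight_le_one hp hmin
    rw [← sum_sdiff (sdiff_subset : s \ N ⊆ s), sdiff_sdiff_self_left, card_insert_of_notMem hvt]
    push_cast
    linarith

end SimpleGraph

theorem stmt6 {V : Type*} [Fintype V] [DecidableEq V] (G : SimpleGraph V) [DecidableRel G.Adj]
    (α₁ : ℕ)
    (hα : IsGreatest
      {n : ℕ | ∃ s : Finset V, s.card = n ∧ ∀ v ∈ s, ∀ w ∈ s, ¬ G.Adj v w} α₁)
    (p : V → ℝ) (hp : ∀ v, p v ∈ Set.Icc (0 : ℝ) 1)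
    (q : V → ℝ)
    (hqdef : ∀ v, q v = 1 - ∏ w ∈ insert v (G.neighborFinset v), (1 - p w)) :
    ∑ v, p v / q v ≤ (1 / (1 - Real.exp (-1))) * ((α₁ : ℝ) + ∑ v, p v) := by
  obtain ⟨t, -, ht, hcw⟩ :=
    G.exists_isIndepSet_sum_div_closedNeighborWeight_le (fun v => (hp v).1) univ
  have hcard : #t ≤ α₁ := hα.2 ⟨t, rfl, fun v hv w hw hvw => ht hv hw hvw.ne hvw⟩
  have hterm : ∀ v, p v / q v ≤ (p v + p v / G.closedNeighborWeight p univ v) / (1 - exp (-1)) :=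
    fun v => by
      rw [hqdef, SimpleGraph.closedNeighborWeight, inter_univ]
      exact div_one_sub_prod_one_sub_le (mem_insert_self _ _) fun w _ => hp w
  calc ∑ v, p v / q v
      ≤ ∑ v, (p v + p v / G.closedNeighborWeight p univ v) / (1 - exp (-1)) :=
        sum_le_sum fun v _ => hterm v
    _ = (∑ v, p v + ∑ v, p v / G.closedNeighborWeight p univ v) / (1 - exp (-1)) := by
        rw [← sum_div, sum_add_distrib]
    _ ≤ (∑ v, p v + α₁) / (1 - exp (-1)) := by
        have hc := one_sub_exp_neg_one_pos
        gcongr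
        exact hcw.trans (by exact_mod_cast hcard)
    _ = (1 / (1 - exp (-1))) * ((α₁ : ℝ) + ∑ v, p v) := by ring
end

section
/- Let S be a finite set with cardinality r ≥ 1 and let p : S → [0, 1] satisfy ∑_{w ∈ S} p(w) ≥ 1. Then 1 − ∏_{w ∈ S}(1 − p(w)) ≥ 1 − (1 − 1/r)^r ≥ 1 − e^{−1}. -/
open Finset

theorem stmt7 {α : Type*} [DecidableEq α] (S : Finset α) (r : ℕ) (hr : r = S.card)
    (hr1 : 1 ≤ r) (p : α → ℝ) (hp : ∀ w ∈ S, p w ∈ Set.Icc (0 : ℝ) 1)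
    (hsum : 1 ≤ ∑ w ∈ S, p w) :
    1 - (1 - 1 / (r : ℝ)) ^ r ≤ 1 - ∏ w ∈ S, (1 - p w) ∧
      1 - Real.exp (-1) ≤ 1 - (1 - 1 / (r : ℝ)) ^ r := by
  have hr0 : (0 : ℝ) < r := by positivity
  have hrne : (r : ℝ) ≠ 0 := ne_of_gt hr0
  have hA0 : (0 : ℝ) ≤ 1 - 1 / (r : ℝ) := by
    have : 1 / (r : ℝ) ≤ 1 := by
      rw [div_le_one hr0]
      exact_mod_cast hr1
    linarith
  constructor
  · -- main AM-GM part
    have hz : ∀ w ∈ S, (0 : ℝ) ≤ 1 - p w := fun w hw => by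
      have := (hp w hw).2; linarith
    have hamgm := Real.geom_mean_le_arith_mean_weighted S (fun _ => 1 / (r : ℝ))
      (fun w => 1 - p w) (fun i _ => by positivity)
      (by simp [hr]; exact div_self (hr ▸ hrne)) hz
    have hsum' : ∑ i ∈ S, (1 / (r : ℝ)) * (1 - p i) ≤ 1 - 1 / (r : ℝ) := by
      rw [← Finset.mul_sum, Finset.sum_sub_distrib, Finset.sum_const, ← hr]
      have : (r : ℝ) - ∑ w ∈ S, p w ≤ (r : ℝ) - 1 := by linarith
      calc (1 / (r : ℝ)) * ((r : ℕ) • (1:ℝ) - ∑ w ∈ S, p w)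
          ≤ (1 / (r : ℝ)) * ((r : ℝ) - 1) := by
            apply mul_le_mul_of_nonneg_left _ (by positivity)
            simpa using this
        _ = 1 - 1 / (r : ℝ) := by field_simp
    have key : ∏ i ∈ S, (1 - p i) ^ (1 / (r : ℝ)) ≤ 1 - 1 / (r : ℝ) :=
      hamgm.trans hsum'
    have hpow : (∏ i ∈ S, (1 - p i) ^ (1 / (r : ℝ))) ^ (r : ℕ) ≤ (1 - 1 / (r : ℝ)) ^ (r : ℕ) := by
      apply pow_le_pow_left₀ _ key
      exact Finset.prod_nonneg fun i hi => Real.rpow_nonneg (hz i hi) _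
    have heq : (∏ i ∈ S, (1 - p i) ^ (1 / (r : ℝ))) ^ (r : ℕ) = ∏ w ∈ S, (1 - p w) := by
      rw [← Finset.prod_pow]
      apply Finset.prod_congr rfl
      intro i hi
      rw [← Real.rpow_natCast ((1 - p i) ^ (1 / (r : ℝ))) r,
        ← Real.rpow_mul (hz i hi), one_div, inv_mul_cancel₀ hrne, Real.rpow_one]
    linarith [heq ▸ hpow]
  · -- (1 - 1/r)^r ≤ exp (-1)
    have h1 : 1 - 1 / (r : ℝ) ≤ Real.exp (-(1 / (r : ℝ))) := by
      have := Real.add_one_le_exp (-(1 / (r : ℝ)))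
      linarith
    have h2 : (1 - 1 / (r : ℝ)) ^ r ≤ Real.exp (-(1 / (r : ℝ))) ^ r :=
      pow_le_pow_left₀ hA0 h1 r
    have h3 : Real.exp (-(1 / (r : ℝ))) ^ r = Real.exp (-1) := by
      rw [← Real.exp_nat_mul]
      congr 1
      field_simp
    linarith [h3 ▸ h2]
end

section
/- Let k ≥ 1 and m ∈ {1, ..., k}. Let Z = (Z_1, ..., Z_k) be a random vector whose coordinates are independent, each with the standard Laplace distribution (law with density z ↦ (1/2)·e^{−|z|} with respect to Lebesgue measure on ℝ). Let A be a nonempty finite subset of {0,1}^k such that every a ∈ A satisfies ∑_{i=1}^k a_i ≤ m. Then E[ max_{a ∈ A} ⟨a, Z⟩ ] ≤ m · ∑_{i=1}^k 1/i ≤ m · (1 + log k). -/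
/-!
Each `⟨a, Z⟩` with `a ∈ A` is bounded in absolute value by `m · M`, where `M = maxᵢ |Zᵢ|`.
The `|Zᵢ|` are independent standard exponential variables, so `P(M ≤ t) = (1 - e^{-t})^k`, and by
the layer cake formula `E[M] = ∫₀^∞ 1 - (1 - e^{-t})^k dt`. Expanding
`1 - (1 - e^{-t})^k = ∑_{j<k} e^{-t} (1 - e^{-t})^j` (a geometric sum) gives `E[M] = ∑_{j<k} 1/(j+1)`,
which is at most `1 + log k`.
-/

open MeasureTheory ProbabilityTheory Real Set Filter Topology

noncomputable def laplaceMeasure : Measure ℝ :=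
  volume.withDensity fun z => ENNReal.ofReal ((1 / 2) * Real.exp (-|z|))

lemma hasDerivAt_one_sub_exp_neg_pow_div (j : ℕ) (t : ℝ) :
    HasDerivAt (fun t => (1 - exp (-t)) ^ (j + 1) / (j + 1))
      (exp (-t) * (1 - exp (-t)) ^ j) t := by
  have h : HasDerivAt (fun t => 1 - exp (-t)) (exp (-t)) t := by
    simpa using ((hasDerivAt_neg t).exp).const_sub 1
  refine ((h.fun_pow (j + 1)).div_const _).congr_deriv ?_
  push_cast
  field_simp

lemma tendsto_one_sub_exp_neg_pow_div (j : ℕ) :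
    Tendsto (fun t => (1 - exp (-t)) ^ (j + 1) / (j + 1)) atTop (𝓝 (1 / (j + 1))) := by
  simpa using ((tendsto_exp_neg_atTop_nhds_zero.const_sub 1).pow (j + 1)).div_const ((j : ℝ) + 1)

lemma exp_neg_mul_one_sub_exp_neg_pow_nonneg {t : ℝ} (ht : 0 ≤ t) (j : ℕ) :
    0 ≤ exp (-t) * (1 - exp (-t)) ^ j := by
  have : exp (-t) ≤ 1 := exp_le_one_iff.mpr (neg_nonpos.mpr ht)
  have : 0 ≤ 1 - exp (-t) := by linarith
  positivity

lemma integrableOn_exp_neg_mul_one_sub_exp_neg_pow (j : ℕ) :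
    IntegrableOn (fun t => exp (-t) * (1 - exp (-t)) ^ j) (Ioi 0) :=
  integrableOn_Ioi_deriv_of_nonneg' (fun t _ => hasDerivAt_one_sub_exp_neg_pow_div j t)
    (fun _ ht => exp_neg_mul_one_sub_exp_neg_pow_nonneg (le_of_lt ht) j)
    (tendsto_one_sub_exp_neg_pow_div j)

lemma integral_exp_neg_mul_one_sub_exp_neg_pow (j : ℕ) :
    ∫ t in Ioi 0, exp (-t) * (1 - exp (-t)) ^ j = 1 / (j + 1) := by
  simpa using integral_Ioi_of_hasDerivAt_of_nonneg'
    (fun t _ => hasDerivAt_one_sub_exp_neg_pow_div j t)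
    (fun _ ht => exp_neg_mul_one_sub_exp_neg_pow_nonneg (le_of_lt ht) j)
    (tendsto_one_sub_exp_neg_pow_div j)

lemma one_sub_one_sub_exp_neg_pow_eq_sum (k : ℕ) :
    (fun t => 1 - (1 - exp (-t)) ^ k) =
      fun t => ∑ j ∈ Finset.range k, exp (-t) * (1 - exp (-t)) ^ j := by
  ext t
  rw [← Finset.mul_sum, ← mul_neg_geom_sum, sub_sub_cancel]

lemma integrableOn_one_sub_one_sub_exp_neg_pow (k : ℕ) :
    IntegrableOn (fun t => 1 - (1 - exp (-t)) ^ k) (Ioi 0) := by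
  rw [one_sub_one_sub_exp_neg_pow_eq_sum]
  exact integrable_finsetSum _ fun j _ => integrableOn_exp_neg_mul_one_sub_exp_neg_pow j

lemma integral_one_sub_one_sub_exp_neg_pow (k : ℕ) :
    ∫ t in Ioi 0, (1 - (1 - exp (-t)) ^ k) = ∑ j ∈ Finset.range k, 1 / ((j : ℝ) + 1) := by
  rw [one_sub_one_sub_exp_neg_pow_eq_sum,
    integral_finsetSum _ fun j _ => integrableOn_exp_neg_mul_one_sub_exp_neg_pow j]
  exact Finset.sum_congr rfl fun j _ => integral_exp_neg_mul_one_sub_exp_neg_pow j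

lemma integrable_and_integral_eq_of_measureReal_lt_eq {α : Type*} [MeasurableSpace α]
    {μ : Measure α} [IsFiniteMeasure μ] {f : α → ℝ} (hf0 : 0 ≤ f) (hf : AEMeasurable f μ)
    {g : ℝ → ℝ} (hg : IntegrableOn g (Ioi 0)) (hfg : ∀ t > 0, μ.real {x | t < f x} = g t) :
    Integrable f μ ∧ ∫ x, f x ∂μ = ∫ t in Ioi 0, g t := by
  have hfg' : ∀ t ∈ Ioi (0 : ℝ), μ {x | t < f x} = ENNReal.ofReal (g t) := fun t ht => by
    rw [← hfg t ht, ofReal_measureReal]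
  have hfint : Integrable f μ := by
    refine (lintegral_ofReal_ne_top_iff_integrable hf.aestronglyMeasurable
      (ae_of_all _ hf0)).1 ?_
    rw [lintegral_eq_lintegral_meas_lt μ (ae_of_all _ hf0) hf,
      setLIntegral_congr_fun measurableSet_Ioi hfg']
    exact ((lintegral_ofReal_le_lintegral_enorm g).trans_lt hg.hasFiniteIntegral).ne
  refine ⟨hfint, ?_⟩
  rw [hfint.integral_eq_integral_meas_lt (ae_of_all _ hf0)]
  exact setIntegral_congr_fun measurableSet_Ioi fun t ht => hfg t ht

lemma laplaceMeasure_real_abs_le {t : ℝ} (ht : 0 ≤ t) :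
    laplaceMeasure.real {x | |x| ≤ t} = 1 - exp (-t) := by
  have hd : Continuous fun x : ℝ => 1 / 2 * exp (-|x|) := by fun_prop
  have hset : {x : ℝ | |x| ≤ t} = Icc (-t) t := by ext x; simp [abs_le]
  have hneg : ∫ x in -t..0, 1 / 2 * exp (-|x|) = ∫ x in 0..t, 1 / 2 * exp (-|x|) := by
    simpa using (intervalIntegral.integral_comp_neg (a := 0) (b := t)
      fun x => 1 / 2 * exp (-|x|)).symm
  have hpos : ∫ x in 0..t, 1 / 2 * exp (-|x|) = (1 - exp (-t)) / 2 := by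
    rw [intervalIntegral.integral_congr (g := fun x => 1 / 2 * exp (-x)) fun x hx => by
      rw [uIcc_of_le ht] at hx
      simp only [abs_of_nonneg hx.1]]
    simp only [intervalIntegral.integral_const_mul, intervalIntegral.integral_comp_neg,
      integral_exp, neg_zero, exp_zero]
    ring
  rw [hset, measureReal_def, laplaceMeasure, withDensity_apply _ measurableSet_Icc,
    ← ofReal_integral_eq_lintegral_ofReal hd.integrableOn_Icc (ae_of_all _ fun x => by positivity),
    ENNReal.toReal_ofReal (setIntegral_nonneg measurableSet_Icc fun x _ => by positivity),
    integral_Icc_eq_integral_Ioc, ← intervalIntegral.integral_of_le (by linarith),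
    ← intervalIntegral.integral_add_adjacent_intervals (b := 0) (hd.intervalIntegrable _ _)
      (hd.intervalIntegrable _ _), hneg, hpos]
  ring

lemma iSup_abs_le_iff {ι : Type*} [Finite ι] {z : ι → ℝ} {t : ℝ} (ht : 0 ≤ t) :
    ⨆ i, |z i| ≤ t ↔ ∀ i, |z i| ≤ t :=
  ⟨fun h i => (le_ciSup (Finite.bddAbove_range _) i).trans h, fun h => Real.iSup_le h ht⟩

lemma abs_sum_mul_le_sum_mul_iSup_abs {ι : Type*} [Fintype ι] {a : ι → ℝ} (ha : 0 ≤ a)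
    (z : ι → ℝ) : |∑ i, a i * z i| ≤ (∑ i, a i) * ⨆ i, |z i| := by
  rw [Finset.sum_mul]
  refine (Finset.abs_sum_le_sum_abs _ _).trans (Finset.sum_le_sum fun i _ => ?_)
  rw [abs_mul, abs_of_nonneg (ha i)]
  exact mul_le_mul_of_nonneg_left (le_ciSup (Finite.bddAbove_range fun i => |z i|) i) (ha i)

lemma abs_sup'_le {ι : Type*} {s : Finset ι} (hs : s.Nonempty) {f : ι → ℝ} {c : ℝ}
    (hf : ∀ i ∈ s, |f i| ≤ c) : |s.sup' hs f| ≤ c := by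
  obtain ⟨i, hi⟩ := hs
  refine abs_le.2 ⟨?_, Finset.sup'_le _ _ fun j hj => (abs_le.1 (hf j hj)).2⟩
  exact (abs_le.1 (hf i hi)).1.trans (Finset.le_sup' f hi)

section LaplaceVector

variable {Ω ι : Type*} [MeasurableSpace Ω] {μ : Measure Ω} [IsProbabilityMeasure μ] [Fintype ι]
  {Z : ι → Ω → ℝ}

lemma measureReal_lt_iSup_abs_of_laplace (hZ : ∀ i, Measurable (Z i))
    (hlaw : ∀ i, μ.map (Z i) = laplaceMeasure) (hind : iIndepFun Z μ) {t : ℝ} (ht : 0 ≤ t) :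
    μ.real {ω | t < ⨆ i, |Z i ω|} = 1 - (1 - exp (-t)) ^ Fintype.card ι := by
  have hS : MeasurableSet {x : ℝ | |x| ≤ t} := measurableSet_le measurable_abs measurable_const
  have hset : {ω | t < ⨆ i, |Z i ω|} = (⋂ i, Z i ⁻¹' {x | |x| ≤ t})ᶜ := by
    ext ω
    simp only [mem_ofPred_eq, mem_compl_iff, mem_iInter, mem_preimage, ← iSup_abs_le_iff ht,
      not_le]
  rw [hset, probReal_compl_eq_one_sub (MeasurableSet.iInter fun i => hZ i hS), measureReal_def,
    hind.meas_iInter fun i => ⟨_, hS, rfl⟩, ENNReal.toReal_prod]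
  simp_rw [← measureReal_def, ← map_measureReal_apply (hZ _) hS, hlaw,
    laplaceMeasure_real_abs_le ht, Finset.prod_const, Finset.card_univ]

lemma integrable_and_integral_iSup_abs_of_laplace (hZ : ∀ i, Measurable (Z i))
    (hlaw : ∀ i, μ.map (Z i) = laplaceMeasure) (hind : iIndepFun Z μ) :
    Integrable (fun ω => ⨆ i, |Z i ω|) μ ∧
      ∫ ω, ⨆ i, |Z i ω| ∂μ = ∑ j ∈ Finset.range (Fintype.card ι), 1 / ((j : ℝ) + 1) := by
  rw [← integral_one_sub_one_sub_exp_neg_pow]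
  exact integrable_and_integral_eq_of_measureReal_lt_eq
    (fun ω => Real.iSup_nonneg fun i => abs_nonneg _)
    (Measurable.iSup fun i => (hZ i).abs).aemeasurable
    (integrableOn_one_sub_one_sub_exp_neg_pow _)
    fun t ht => measureReal_lt_iSup_abs_of_laplace hZ hlaw hind (le_of_lt ht)

end LaplaceVector

theorem stmt10_general {Ω : Type*} [MeasurableSpace Ω] (μ : Measure Ω) [IsProbabilityMeasure μ]
    (k m : ℕ)
    (Z : Fin k → Ω → ℝ) (hZ : ∀ i, Measurable (Z i))
    (hlaw : ∀ i, Measure.map (Z i) μ = laplaceMeasure)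
    (hind : iIndepFun Z μ)
    (A : Finset (Fin k → ℝ)) (hA : A.Nonempty)
    (hA01 : ∀ a ∈ A, ∀ i, a i = 0 ∨ a i = 1)
    (hAm : ∀ a ∈ A, ∑ i, a i ≤ (m : ℝ)) :
    (∫ ω, A.sup' hA (fun a => ∑ i, a i * Z i ω) ∂μ
        ≤ (m : ℝ) * ∑ i ∈ Finset.range k, 1 / ((i : ℝ) + 1)) ∧
      (m : ℝ) * ∑ i ∈ Finset.range k, 1 / ((i : ℝ) + 1) ≤ (m : ℝ) * (1 + Real.log k) := by
  obtain ⟨hMint, hM⟩ := integrable_and_integral_iSup_abs_of_laplace hZ hlaw hind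
  rw [Fintype.card_fin] at hM
  have hbound : ∀ ω, |A.sup' hA (fun a => ∑ i, a i * Z i ω)| ≤ m * ⨆ i, |Z i ω| := fun ω =>
    abs_sup'_le hA fun a ha => (abs_sum_mul_le_sum_mul_iSup_abs
      (fun i => by rcases hA01 a ha i with h | h <;> simp [h]) _).trans
      (mul_le_mul_of_nonneg_right (hAm a ha) (Real.iSup_nonneg fun i => abs_nonneg _))
  have hmeas : Measurable fun ω => A.sup' hA (fun a => ∑ i, a i * Z i ω) := by
    convert Finset.measurable_sup' hA (f := fun a ω => ∑ i, a i * Z i ω)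
      (fun a _ => by fun_prop) using 1
    ext ω
    rw [Finset.sup'_apply]
  refine ⟨?_, mul_le_mul_of_nonneg_left ?_ (Nat.cast_nonneg m)⟩
  · calc ∫ ω, A.sup' hA (fun a => ∑ i, a i * Z i ω) ∂μ
        ≤ ∫ ω, m * ⨆ i, |Z i ω| ∂μ :=
          integral_mono ((hMint.const_mul m).mono' hmeas.aestronglyMeasurable (ae_of_all _ hbound))
            (hMint.const_mul m) fun ω => (le_abs_self _).trans (hbound ω)
      _ = m * ∑ i ∈ Finset.range k, 1 / ((i : ℝ) + 1) := by rw [integral_const_mul, hM]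
  · simpa [harmonic, one_div] using harmonic_le_one_add_log k

theorem stmt10 {Ω : Type*} [MeasurableSpace Ω] (μ : Measure Ω) [IsProbabilityMeasure μ]
    (k m : ℕ) (hk : 1 ≤ k) (hm : 1 ≤ m) (hmk : m ≤ k)
    (Z : Fin k → Ω → ℝ) (hZ : ∀ i, Measurable (Z i))
    (hlaw : ∀ i, Measure.map (Z i) μ = laplaceMeasure)
    (hind : iIndepFun Z μ)
    (A : Finset (Fin k → ℝ)) (hA : A.Nonempty)
    (hA01 : ∀ a ∈ A, ∀ i, a i = 0 ∨ a i = 1)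
    (hAm : ∀ a ∈ A, ∑ i, a i ≤ (m : ℝ)) :
    (∫ ω, A.sup' hA (fun a => ∑ i, a i * Z i ω) ∂μ
        ≤ (m : ℝ) * ∑ i ∈ Finset.range k, 1 / ((i : ℝ) + 1)) ∧
      (m : ℝ) * ∑ i ∈ Finset.range k, 1 / ((i : ℝ) + 1) ≤ (m : ℝ) * (1 + Real.log k) :=
  stmt10_general μ k m Z hZ hlaw hind A hA hA01 hAm
end
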